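/- The function f : (0,∞) → ℝ defined by f(t) := √t · ∫_{|y| < 1/t} |y|^{−1} |y + e₃|^{−3/2} dy (where e₃ = (0,0,1)) is bounded: there exists M < ∞ with f(t) ≤ M for all t > 0. -/

import Mathlib

open Real MeasureTheory

noncomputable def e₃ : EuclideanSpace ℝ (Fin 3) := EuclideanSpace.single 2 1

noncomputable def holeScalingFn (t : ℝ) : ℝ :=
  Real.sqrt t *
    ∫ y in Metric.ball (0 : EuclideanSpace ℝ (Fin 3)) (1 / t),
      ‖y‖⁻¹ * ‖y + e₃‖ ^ (-(3 : ℝ) / 2)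

open Metric Set ENNReal

local notation "E3" => EuclideanSpace ℝ (Fin 3)

lemma dimE3 : Module.finrank ℝ (EuclideanSpace ℝ (Fin 3)) = 3 := by simp

lemma lintegral_fun_norm (F : ℝ → ℝ≥0∞) (hF : Measurable F) :
    ∫⁻ x : E3, F ‖x‖ =
      3 * volume (ball (0 : E3) 1) *
        ∫⁻ r in Ioi (0 : ℝ), ENNReal.ofReal (r ^ 2) * F r := by
  have h0 : ∫⁻ x : E3, F ‖x‖
      = ∫⁻ x : ({0}ᶜ : Set E3), F ‖(x : E3)‖ ∂((volume : Measure E3).comap Subtype.val) := by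
    rw [lintegral_subtype_comap (measurableSet_singleton (0:E3)).compl fun x : E3 => F ‖x‖,
      MeasureTheory.restrict_compl_singleton _]
  have hmeas : Measurable fun p : sphere (0:E3) 1 × Ioi (0:ℝ) => F p.2 :=
    hF.comp (measurable_subtype_coe.comp measurable_snd)
  have h1 := (Measure.measurePreserving_homeomorphUnitSphereProd
      (volume : Measure E3)).lintegral_comp hmeas
  have h1' : ∫⁻ x : ({0}ᶜ : Set E3), F ‖(x : E3)‖ ∂((volume : Measure E3).comap Subtype.val)
      = ∫⁻ p : sphere (0:E3) 1 × Ioi (0:ℝ), F p.2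
          ∂((volume : Measure E3).toSphere.prod
              (Measure.volumeIoiPow (Module.finrank ℝ E3 - 1))) := by
    rw [← h1]; simp only [homeomorphUnitSphereProd_apply_snd_coe]
  rw [h0, h1', lintegral_prod _ hmeas.aemeasurable]
  simp only [lintegral_const]
  rw [Measure.toSphere_apply_univ, dimE3]
  have h2 : ∫⁻ y : Ioi (0:ℝ), F y ∂Measure.volumeIoiPow (Module.finrank ℝ E3 - 1)
      = ∫⁻ r in Ioi (0:ℝ), ENNReal.ofReal (r ^ 2) * F r := by
    rw [dimE3]
    rw [Measure.volumeIoiPow,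
      lintegral_withDensity_eq_lintegral_mul _ (by fun_prop) (by fun_prop)]
    simp only [Pi.mul_apply]
    exact lintegral_subtype_comap measurableSet_Ioi
      (fun r : ℝ => ENNReal.ofReal (r ^ 2) * F r)
  rw [dimE3] at h2
  rw [h2]
  ring

lemma lintegral_ball_rpow {p : ℝ} (hp : -3 < p) {R : ℝ} (hR : 0 ≤ R) :
    ∫⁻ y in ball (0 : E3) R, ENNReal.ofReal (‖y‖ ^ p) =
      3 * volume (ball (0 : E3) 1) * ENNReal.ofReal (R ^ (p + 3) / (p + 3)) := by
  set F : ℝ → ℝ≥0∞ := (Iio R).indicator (fun r => ENNReal.ofReal (r ^ p)) with hFdef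
  have hF : Measurable F := by
    apply Measurable.indicator _ measurableSet_Iio
    fun_prop
  have h1 : ∫⁻ y in ball (0 : E3) R, ENNReal.ofReal (‖y‖ ^ p) = ∫⁻ x : E3, F ‖x‖ := by
    rw [← lintegral_indicator measurableSet_ball]
    refine lintegral_congr fun x => ?_
    by_cases hx : x ∈ ball (0 : E3) R
    · rw [Set.indicator_of_mem hx, hFdef,
        Set.indicator_of_mem (by simpa [mem_ball_zero_iff] using hx)]
    · rw [Set.indicator_of_notMem hx, hFdef,
        Set.indicator_of_notMem (by simpa [mem_ball_zero_iff] using hx)]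
  have h2 : ∫⁻ r in Ioi (0:ℝ), ENNReal.ofReal (r ^ 2) * F r
      = ∫⁻ r in Ioo (0:ℝ) R, ENNReal.ofReal (r ^ (p + 2)) := by
    have : ∀ r : ℝ, ENNReal.ofReal (r ^ 2) * F r
        = (Iio R).indicator (fun r => ENNReal.ofReal (r ^ 2) * ENNReal.ofReal (r ^ p)) r := by
      intro r
      by_cases hr : r ∈ Iio R
      · rw [hFdef, Set.indicator_of_mem hr, Set.indicator_of_mem hr]
      · rw [hFdef, Set.indicator_of_notMem hr, Set.indicator_of_notMem hr, mul_zero]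
    simp only [this]
    rw [lintegral_indicator measurableSet_Iio, Measure.restrict_restrict measurableSet_Iio]
    rw [show Iio R ∩ Ioi (0:ℝ) = Ioo 0 R from by rw [Set.inter_comm, Set.Ioi_inter_Iio]]
    refine setLIntegral_congr_fun measurableSet_Ioo ?_
    intro r hr
    dsimp only
    rw [← ENNReal.ofReal_mul (by positivity), ← Real.rpow_two,
      ← Real.rpow_add hr.1, add_comm]
  have h3 : ∫⁻ r in Ioo (0:ℝ) R, ENNReal.ofReal (r ^ (p + 2))
      = ENNReal.ofReal (R ^ (p + 3) / (p + 3)) := by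
    have hint : IntegrableOn (fun r : ℝ => r ^ (p + 2)) (Ioo 0 R) := by
      apply IntegrableOn.mono_set _ Set.Ioo_subset_Ioc_self
      have : IntervalIntegrable (fun x : ℝ => x ^ (p+2)) volume 0 R :=
        intervalIntegral.intervalIntegrable_rpow' (by linarith)
      rwa [intervalIntegrable_iff_integrableOn_Ioc_of_le hR] at this
    rw [← ofReal_integral_eq_lintegral_ofReal hint]
    · congr 1
      rw [← MeasureTheory.integral_Ioc_eq_integral_Ioo, ← intervalIntegral.integral_of_le hR,
        integral_rpow (Or.inl (by linarith)), Real.zero_rpow (by linarith), sub_zero]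
      norm_num [show p + 2 + 1 = p + 3 from by ring]
    · filter_upwards [ae_restrict_mem measurableSet_Ioo] with r hr
      exact Real.rpow_nonneg hr.1.le _
  rw [h1, lintegral_fun_norm F hF, h2, h3]

lemma e₃_norm : ‖e₃‖ = 1 := by
  rw [e₃, EuclideanSpace.norm_single]; norm_num

lemma g_meas : Measurable fun y : E3 => ENNReal.ofReal (‖y‖⁻¹ * ‖y + e₃‖ ^ (-(3:ℝ)/2)) := by
  fun_prop

lemma pointB (y : E3) : ‖y‖⁻¹ * ‖y + e₃‖ ^ (-(3:ℝ)/2)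
    ≤ ‖y‖ ^ (-(5:ℝ)/2) + ‖y + e₃‖ ^ (-(5:ℝ)/2) := by
  rcases eq_or_ne y 0 with rfl | hy
  · rw [show ‖(0:E3)‖⁻¹ = 0 by simp, zero_mul]
    exact add_nonneg (Real.rpow_nonneg (norm_nonneg _) _) (Real.rpow_nonneg (norm_nonneg _) _)
  rcases eq_or_ne (y + e₃) 0 with h0 | hz
  · rw [h0, norm_zero, Real.zero_rpow (by norm_num), mul_zero]
    exact add_nonneg (Real.rpow_nonneg (norm_nonneg _) _)
      (le_of_eq (Real.zero_rpow (by norm_num)).symm)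
  have ha : 0 < ‖y‖ := norm_pos_iff.mpr hy
  have hb : 0 < ‖y + e₃‖ := norm_pos_iff.mpr hz
  rcases le_total ‖y‖ ‖y + e₃‖ with h | h
  · have h1 : ‖y + e₃‖ ^ (-(3:ℝ)/2) ≤ ‖y‖ ^ (-(3:ℝ)/2) :=
      Real.rpow_le_rpow_of_nonpos ha h (by norm_num)
    have h2 : ‖y‖ ^ (-(5:ℝ)/2) = ‖y‖⁻¹ * ‖y‖ ^ (-(3:ℝ)/2) := by
      rw [show (-(5:ℝ)/2) = (-1) + (-(3:ℝ)/2) by norm_num, Real.rpow_add ha,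
        Real.rpow_neg_one]
    calc ‖y‖⁻¹ * ‖y + e₃‖ ^ (-(3:ℝ)/2) ≤ ‖y‖⁻¹ * ‖y‖ ^ (-(3:ℝ)/2) := by
          apply mul_le_mul_of_nonneg_left h1 (by positivity)
      _ = ‖y‖ ^ (-(5:ℝ)/2) := h2.symm
      _ ≤ _ := le_add_of_nonneg_right (Real.rpow_nonneg hb.le _)
  · have h1 : ‖y‖⁻¹ ≤ ‖y + e₃‖⁻¹ := by
      apply inv_anti₀ hb h
    have h2 : ‖y + e₃‖ ^ (-(5:ℝ)/2) = ‖y + e₃‖⁻¹ * ‖y + e₃‖ ^ (-(3:ℝ)/2) := by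
      rw [show (-(5:ℝ)/2) = (-1) + (-(3:ℝ)/2) by norm_num, Real.rpow_add hb,
        Real.rpow_neg_one]
    calc ‖y‖⁻¹ * ‖y + e₃‖ ^ (-(3:ℝ)/2) ≤ ‖y + e₃‖⁻¹ * ‖y + e₃‖ ^ (-(3:ℝ)/2) := by
          apply mul_le_mul_of_nonneg_right h1 (by positivity)
      _ = ‖y + e₃‖ ^ (-(5:ℝ)/2) := h2.symm
      _ ≤ _ := le_add_of_nonneg_left (Real.rpow_nonneg ha.le _)

lemma caseA {t : ℝ} (ht : 2 ≤ t) :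
    ∫⁻ y in ball (0 : E3) (1/t), ENNReal.ofReal (‖y‖⁻¹ * ‖y + e₃‖ ^ (-(3:ℝ)/2))
      ≤ ENNReal.ofReal 4 * (3 * volume (ball (0 : E3) 1)
          * ENNReal.ofReal ((1/t) ^ ((-1:ℝ) + 3) / ((-1:ℝ) + 3))) := by
  have ht0 : (0:ℝ) < t := by linarith
  have hR : (0:ℝ) < 1/t := by positivity
  have hR2 : (1:ℝ)/t ≤ 1/2 := by
    apply div_le_div_of_nonneg_left (by norm_num) (by norm_num) ht
  have key : ∀ y ∈ ball (0 : E3) (1/t),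
      ENNReal.ofReal (‖y‖⁻¹ * ‖y + e₃‖ ^ (-(3:ℝ)/2))
        ≤ ENNReal.ofReal (4 * ‖y‖ ^ (-1:ℝ)) := by
    intro y hy
    apply ENNReal.ofReal_le_ofReal
    have hy' : ‖y‖ < 1/2 := lt_of_lt_of_le (by simpa [mem_ball_zero_iff] using hy) hR2
    have hb : (1:ℝ)/2 ≤ ‖y + e₃‖ := by
      have h1 : ‖(y + e₃) - y‖ ≤ ‖y + e₃‖ + ‖y‖ := norm_sub_le _ _
      rw [add_sub_cancel_left, e₃_norm] at h1
      linarith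
    have h2 : ‖y + e₃‖ ^ (-(3:ℝ)/2) ≤ ((1:ℝ)/2) ^ (-(3:ℝ)/2) :=
      Real.rpow_le_rpow_of_nonpos (by norm_num) hb (by norm_num)
    have h3 : ((1:ℝ)/2) ^ (-(3:ℝ)/2) ≤ 4 := by
      rw [show (-(3:ℝ)/2) = -(3/2) by ring, Real.rpow_neg (by norm_num),
        show ((1:ℝ)/2) = 2⁻¹ by norm_num, ← Real.rpow_neg_one,
        ← Real.rpow_mul (by norm_num), ← Real.rpow_neg_one,
        ← Real.rpow_mul (by norm_num)]
      norm_num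
      calc (2:ℝ) ^ ((3:ℝ)/2) ≤ 2 ^ (2:ℝ) :=
            Real.rpow_le_rpow_of_exponent_le one_le_two (by norm_num)
        _ ≤ 4 := by rw [show (2:ℝ) = ((2:ℕ):ℝ) by norm_num, Real.rpow_natCast]; norm_num
    calc ‖y‖⁻¹ * ‖y + e₃‖ ^ (-(3:ℝ)/2) ≤ ‖y‖⁻¹ * 4 := by
          apply mul_le_mul_of_nonneg_left (h2.trans h3) (by positivity)
      _ = 4 * ‖y‖ ^ (-1:ℝ) := by rw [Real.rpow_neg_one]; ring
  calc ∫⁻ y in ball (0 : E3) (1/t), ENNReal.ofReal (‖y‖⁻¹ * ‖y + e₃‖ ^ (-(3:ℝ)/2))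
      ≤ ∫⁻ y in ball (0 : E3) (1/t), ENNReal.ofReal (4 * ‖y‖ ^ (-1:ℝ)) := by
        apply setLIntegral_mono_ae (by fun_prop)
        exact Filter.Eventually.of_forall key
    _ = ENNReal.ofReal 4 * ∫⁻ y in ball (0 : E3) (1/t), ENNReal.ofReal (‖y‖ ^ (-1:ℝ)) := by
        simp_rw [ENNReal.ofReal_mul (by norm_num : (0:ℝ) ≤ 4)]
        rw [lintegral_const_mul _ (by fun_prop)]
    _ ≤ _ := by
        rw [lintegral_ball_rpow (by norm_num) hR.le]

lemma caseB {t : ℝ} (ht0 : 0 < t) :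
    ∫⁻ y in ball (0 : E3) (1/t), ENNReal.ofReal (‖y‖⁻¹ * ‖y + e₃‖ ^ (-(3:ℝ)/2))
      ≤ 3 * volume (ball (0 : E3) 1)
          * ENNReal.ofReal ((1/t) ^ ((-(5:ℝ)/2) + 3) / ((-(5:ℝ)/2) + 3))
        + 3 * volume (ball (0 : E3) 1)
          * ENNReal.ofReal ((1/t + 1) ^ ((-(5:ℝ)/2) + 3) / ((-(5:ℝ)/2) + 3)) := by
  have hR : (0:ℝ) < 1/t := by positivity
  calc ∫⁻ y in ball (0 : E3) (1/t), ENNReal.ofReal (‖y‖⁻¹ * ‖y + e₃‖ ^ (-(3:ℝ)/2))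
      ≤ ∫⁻ y in ball (0 : E3) (1/t),
          (ENNReal.ofReal (‖y‖ ^ (-(5:ℝ)/2)) + ENNReal.ofReal (‖y + e₃‖ ^ (-(5:ℝ)/2))) := by
        apply lintegral_mono
        intro y
        dsimp only
        rw [← ENNReal.ofReal_add (Real.rpow_nonneg (norm_nonneg _) _)
          (Real.rpow_nonneg (norm_nonneg _) _)]
        exact ENNReal.ofReal_le_ofReal (pointB y)
    _ = (∫⁻ y in ball (0 : E3) (1/t), ENNReal.ofReal (‖y‖ ^ (-(5:ℝ)/2)))
        + ∫⁻ y in ball (0 : E3) (1/t), ENNReal.ofReal (‖y + e₃‖ ^ (-(5:ℝ)/2)) := by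
        rw [lintegral_add_left (by fun_prop)]
    _ ≤ _ := by
        apply add_le_add
        · rw [lintegral_ball_rpow (by norm_num) hR.le]
        · have hpre : ball (0 : E3) (1/t) = (fun y : E3 => y + e₃) ⁻¹' (ball e₃ (1/t)) := by
            ext y
            simp [mem_ball, dist_eq_norm]
          rw [hpre, (measurePreserving_add_right volume e₃).setLIntegral_comp_preimage
            measurableSet_ball (f := fun z : E3 => ENNReal.ofReal (‖z‖ ^ (-(5:ℝ)/2)))
            (by fun_prop)]
          calc ∫⁻ z in ball e₃ (1/t), ENNReal.ofReal (‖z‖ ^ (-(5:ℝ)/2))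
              ≤ ∫⁻ z in ball (0 : E3) (1/t + 1), ENNReal.ofReal (‖z‖ ^ (-(5:ℝ)/2)) := by
                apply lintegral_mono_set
                apply ball_subset_ball'
                rw [dist_eq_norm, sub_zero, e₃_norm]
            _ ≤ _ := by rw [lintegral_ball_rpow (by norm_num) (by positivity)]

theorem holeScalingFn_bounded :
    ∃ M : ℝ, ∀ t : ℝ, 0 < t → holeScalingFn t ≤ M := by
  set V := volume (ball (0 : E3) 1) with hV
  have hVne : 3 * V ≠ ⊤ := ENNReal.mul_ne_top (by simp) measure_ball_lt_top.ne
  set K := (3 * V).toReal with hK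
  have hK0 : 0 ≤ K := ENNReal.toReal_nonneg
  refine ⟨6 * K, fun t ht0 => ?_⟩
  have hrepr : holeScalingFn t
      = Real.sqrt t * (∫⁻ y in ball (0 : E3) (1/t),
          ENNReal.ofReal (‖y‖⁻¹ * ‖y + e₃‖ ^ (-(3:ℝ)/2))).toReal := by
    rw [holeScalingFn]
    congr 1
    rw [integral_eq_lintegral_of_nonneg_ae]
    · exact Filter.Eventually.of_forall fun y => by positivity
    · apply Measurable.aestronglyMeasurable
      fun_prop
  rcases le_total 2 t with hA | hB
  · -- case t ≥ 2
    have h := caseA hA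
    set c : ℝ := (1/t) ^ ((-1:ℝ) + 3) / ((-1:ℝ) + 3) with hc
    have hc0 : 0 ≤ c := by
      apply div_nonneg (Real.rpow_nonneg (by positivity) _) (by norm_num)
    have hfin : ENNReal.ofReal 4 * (3 * V * ENNReal.ofReal c) ≠ ⊤ :=
      ENNReal.mul_ne_top ENNReal.ofReal_ne_top (ENNReal.mul_ne_top hVne ENNReal.ofReal_ne_top)
    have h2 := ENNReal.toReal_mono hfin h
    rw [ENNReal.toReal_mul, ENNReal.toReal_mul, ENNReal.toReal_ofReal (by norm_num),
      ENNReal.toReal_ofReal hc0] at h2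
    rw [hrepr]
    have hceq : c = 1 / (2 * t^2) := by
      rw [hc, show ((-1:ℝ) + 3) = ((2:ℕ):ℝ) by norm_num, Real.rpow_natCast]
      field_simp
      ring
    have hst : Real.sqrt t ≤ t ^ 2 := by
      nlinarith [Real.sq_sqrt ht0.le, Real.sqrt_nonneg t, sq_nonneg (Real.sqrt t - 1),
        sq_nonneg (Real.sqrt t + 1)]
    calc Real.sqrt t * (∫⁻ y in ball (0 : E3) (1/t),
          ENNReal.ofReal (‖y‖⁻¹ * ‖y + e₃‖ ^ (-(3:ℝ)/2))).toReal
        ≤ Real.sqrt t * (4 * ((3*V).toReal * c)) :=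
          mul_le_mul_of_nonneg_left h2 (Real.sqrt_nonneg t)
      _ = 2 * K * (Real.sqrt t / t^2) := by rw [hceq, ← hK]; field_simp; ring
      _ ≤ 2 * K * 1 := by
          apply mul_le_mul_of_nonneg_left _ (by positivity)
          rw [div_le_one (by positivity)]
          exact hst
      _ ≤ 6 * K := by linarith
  · -- case t ≤ 2
    have h := caseB ht0
    have hq : ((-(5:ℝ)/2) + 3) = 1/2 := by norm_num
    set c1 : ℝ := (1/t) ^ ((-(5:ℝ)/2) + 3) / ((-(5:ℝ)/2) + 3) with hc1
    set c2 : ℝ := (1/t + 1) ^ ((-(5:ℝ)/2) + 3) / ((-(5:ℝ)/2) + 3) with hc2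
    have hc10 : 0 ≤ c1 := div_nonneg (Real.rpow_nonneg (by positivity) _) (by norm_num)
    have hc20 : 0 ≤ c2 := div_nonneg (Real.rpow_nonneg (by positivity) _) (by norm_num)
    have hfin : 3 * V * ENNReal.ofReal c1 + 3 * V * ENNReal.ofReal c2 ≠ ⊤ := by
      apply ENNReal.add_ne_top.mpr
      exact ⟨ENNReal.mul_ne_top hVne ENNReal.ofReal_ne_top,
        ENNReal.mul_ne_top hVne ENNReal.ofReal_ne_top⟩
    have h2 := ENNReal.toReal_mono hfin h
    simp only [ENNReal.toReal_add (ENNReal.mul_ne_top hVne ENNReal.ofReal_ne_top)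
        (ENNReal.mul_ne_top hVne ENNReal.ofReal_ne_top),
      ENNReal.toReal_mul, ENNReal.toReal_ofReal hc10,
      ENNReal.toReal_ofReal hc20] at h2
    have hKeq : K = ENNReal.toReal 3 * V.toReal := by rw [hK, ENNReal.toReal_mul]
    rw [← hKeq] at h2
    have hc1eq : c1 = 2 * Real.sqrt (1/t) := by
      rw [hc1, hq, ← Real.sqrt_eq_rpow]; ring
    have hc2eq : c2 = 2 * Real.sqrt (1/t + 1) := by
      rw [hc2, hq, ← Real.sqrt_eq_rpow]; ring
    have hs1 : Real.sqrt t * Real.sqrt (1/t) = 1 := by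
      rw [← Real.sqrt_mul ht0.le, mul_one_div_cancel ht0.ne', Real.sqrt_one]
    have hs2 : Real.sqrt t * Real.sqrt (1/t + 1) ≤ 2 := by
      rw [← Real.sqrt_mul ht0.le]
      have : t * (1/t + 1) = 1 + t := by field_simp
      rw [this]
      calc Real.sqrt (1 + t) ≤ Real.sqrt 4 := Real.sqrt_le_sqrt (by linarith)
        _ = 2 := by rw [show (4:ℝ) = 2^2 by norm_num, Real.sqrt_sq (by norm_num)]
    rw [hrepr]
    calc Real.sqrt t * (∫⁻ y in ball (0 : E3) (1/t),
          ENNReal.ofReal (‖y‖⁻¹ * ‖y + e₃‖ ^ (-(3:ℝ)/2))).toReal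
        ≤ Real.sqrt t * (K * c1 + K * c2) :=
          mul_le_mul_of_nonneg_left h2 (Real.sqrt_nonneg t)
      _ = 2 * K * (Real.sqrt t * Real.sqrt (1/t))
          + 2 * K * (Real.sqrt t * Real.sqrt (1/t + 1)) := by
          rw [hc1eq, hc2eq]; ring
      _ ≤ 2 * K * 1 + 2 * K * 2 := by
          apply add_le_add
          · apply mul_le_mul_of_nonneg_left (le_of_eq hs1) (by positivity)
          · apply mul_le_mul_of_nonneg_left hs2 (by positivity)
      _ = 6 * K := by ring
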